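/- Let κ be a regular uncountable cardinal, ⟨λ_i : i < κ⟩ an increasing continuous sequence of cardinals with λ_i > κ for all i, λ = sup_{i<κ} λ_i, let D be the club filter on κ, and let γ(*) = rk_D(⟨λ_i⁺ : i < κ⟩). Then cf(γ(*)) > λ; in particular the interval (λ, γ(*)] contains a regular cardinal. -/

import Mathlib

/-! Let `F i = (λ_i⁺).ord` and suppose at most `λ` ordinals `f a` lie below `γ(*) = rk_D F`;
pick `g a <_D F` with `f a ≤ rk_D (g a)` and index the family injectively by ordinals `ν a < λ`.
Since the `λ_i` increase to `λ`, each `a` lies in `S_i = {a | ν a < λ_i}` for club-many `i`, and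
`|S_i| ≤ λ_i < cf λ_i⁺` gives `g i := sup_{a ∈ S_i} g a i < λ_i⁺`. Then `g a ≤_D g` for all `a`,
so `rk_D (g + 1) < γ(*)` bounds the family: `cf γ(*) > λ`. That `<_D` is well-founded at all comes
from the countable completeness of the club filter on an ordinal of uncountable cofinality. -/

/-- `f <_D g` iff `{y | f y < g y} ∈ D`. -/
def ltD {Y : Type 1} (D : Filter Y) (f g : Y → Ordinal.{0}) : Prop :=
  {y | f y < g y} ∈ D

/-- The rank `rk_D f` of `f : Y → Ord` with respect to the (well-founded, for countably
complete `D`) relation `<_D`. -/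
noncomputable def rkD {Y : Type 1} (D : Filter Y) (f : Y → Ordinal.{0}) : Ordinal.{1} :=
  haveI := Classical.dec
  if h : Acc (ltD D) f then h.rank else 0

/-- `C` is a club (closed unbounded set) in the ordinal `k`. -/
def IsClubIn (C : Set Ordinal) (k : Ordinal) : Prop :=
  C ⊆ Set.Iio k ∧ (∀ β < k, ∃ γ ∈ C, β ≤ γ) ∧
    ∀ δ < k, Order.IsSuccLimit δ → (∀ β < δ, ∃ γ ∈ C, β < γ ∧ γ < δ) → δ ∈ C

/-- The club filter on (the set of ordinals below) `k`: the filter generated by the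
closed unbounded subsets of `k`. -/
def clubFilter (k : Ordinal) : Filter ↥(Set.Iio k) :=
  Filter.generate {S : Set ↥(Set.Iio k) |
    ∃ C : Set Ordinal, IsClubIn C k ∧ S = {x : ↥(Set.Iio k) | ↑x ∈ C}}

open Cardinal Filter Order Set

section Rank

variable {Y : Type 1} {D : Filter Y}

theorem ltD_mono {D' : Filter Y} (h : D ≤ D') {f g : Y → Ordinal.{0}} (hfg : ltD D' f g) :
    ltD D f g :=
  h hfg

theorem wellFounded_ltD [CountableInterFilter D] [D.NeBot] : WellFounded (ltD D) := by
  refine wellFounded_iff_isEmpty_descending_chain.2 ⟨fun ⟨f, hf⟩ => ?_⟩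
  obtain ⟨y, hy⟩ := Filter.nonempty_of_mem (countable_iInter_mem.2 hf : ⋂ n, _ ∈ D)
  exact not_strictAnti_of_wellFoundedLT (f · y) (strictAnti_nat_of_succ_lt (mem_iInter.1 hy))

theorem rkD_eq_rank (hwf : WellFounded (ltD D)) (f : Y → Ordinal.{0}) :
    rkD D f = (hwf.apply f).rank :=
  dif_pos (hwf.apply f)

theorem rkD_lt_rkD (hwf : WellFounded (ltD D)) {f g : Y → Ordinal.{0}} (h : ltD D f g) :
    rkD D f < rkD D g := by
  rw [rkD_eq_rank hwf, rkD_eq_rank hwf]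
  exact (hwf.apply g).rank_lt_of_rel h

theorem rkD_le_rkD (hwf : WellFounded (ltD D)) {f g : Y → Ordinal.{0}}
    (h : ∀ᶠ y in D, f y ≤ g y) : rkD D f ≤ rkD D g := by
  rw [rkD_eq_rank hwf f, Acc.rank_eq]
  refine Ordinal.iSup_le fun ⟨b, hb⟩ => succ_le_of_lt ?_
  have hbg : ∀ᶠ y in D, b y < g y :=
    (Eventually.and hb h).mono fun _ hy => hy.1.trans_le hy.2
  exact (rkD_eq_rank hwf b).symm.trans_lt (rkD_lt_rkD hwf hbg)

theorem exists_ltD_le_rkD (hwf : WellFounded (ltD D)) {f : Y → Ordinal.{0}} {α : Ordinal.{1}}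
    (hα : α < rkD D f) : ∃ g, ltD D g f ∧ α ≤ rkD D g := by
  rw [rkD_eq_rank hwf, Acc.rank_eq, Ordinal.lt_iSup_iff] at hα
  obtain ⟨⟨g, hg⟩, hαg⟩ := hα
  exact ⟨g, hg, (rkD_eq_rank hwf g).symm ▸ lt_succ_iff.1 hαg⟩

end Rank

theorem IsClubIn.isClub_preimage {C : Set Ordinal} {k : Ordinal} (hC : IsClubIn C k) :
    IsClub (Subtype.val ⁻¹' C : Set (Iio k)) := by
  obtain ⟨hCk, hunb, hclosed⟩ := hC
  refine ⟨dirSupClosed_iff_of_linearOrder.2 fun d hdC hd a ha => ?_, fun x => ?_⟩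
  · by_cases had : a ∈ d
    · exact hdC had
    -- a supremum that `d` does not attain is a limit point of `d`
    have hlt : ∀ c ∈ d, c < a := fun c hc => (ha.1 hc).lt_of_ne (ne_of_mem_of_not_mem hc had)
    have hcofinal : ∀ β < (a : Ordinal), ∃ γ ∈ C, β < γ ∧ γ < a := by
      intro β hβ
      obtain ⟨c, hcd, hβc⟩ := (lt_isLUB_iff ha).1 (show (⟨β, hβ.trans a.2⟩ : Iio k) < a from hβ)
      exact ⟨c, hdC hcd, hβc, hlt c hcd⟩
    obtain ⟨c, hc⟩ := hd
    refine hclosed a a.2 (Ordinal.isSuccLimit_iff.2 ⟨?_, ?_⟩) hcofinal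
    · exact (lt_of_le_of_lt zero_le (show (c : Ordinal) < a from hlt c hc)).ne'
    · refine isSuccPrelimit_iff_succ_lt.2 fun β hβ => ?_
      obtain ⟨γ, -, hβγ, hγa⟩ := hcofinal β hβ
      exact (succ_le_of_lt hβγ).trans_lt hγa
  · obtain ⟨γ, hγC, hxγ⟩ := hunb x x.2
    exact ⟨⟨γ, hCk hγC⟩, hγC, hxγ⟩

theorem wellFounded_ltD_clubFilter {k : Ordinal.{0}} (hk : ℵ₀ < k.cof) :
    WellFounded (ltD (clubFilter k)) := by
  set g := {S : Set (Iio k) | ∃ C : Set Ordinal, IsClubIn C k ∧ S = {x : Iio k | ↑x ∈ C}}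
  have hg : ∀ S ∈ g, IsClub S := by
    rintro _ ⟨C, hC, rfl⟩
    exact hC.isClub_preimage
  have hcof : Order.cof (Iio k) ≠ ℵ₀ := by
    rw [Ordinal.cof_Iio, ← Ordinal.lift_cof]
    exact (aleph0_lt_lift.2 hk).ne'
  have : Nonempty (Iio k) := ⟨⟨0, (Ordinal.one_lt_cof_iff.1 (one_lt_aleph0.trans hk)).pos⟩⟩
  -- countably many clubs of `Iio k` meet in a club, so the countably complete filter
  -- generated by the clubs is proper
  have : (countableGenerate g).NeBot := forall_mem_nonempty_iff_neBot.1 fun s hs => by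
    obtain ⟨S, hSg, hS, hSs⟩ := mem_countableGenerate_iff.1 hs
    exact ((IsClub.sInter_of_countable hcof hS fun C hC => hg C (hSg hC)).nonempty).mono hSs
  exact Subrelation.wf (ltD_mono (le_generate_iff.2 (countableGenerate_isGreatest g).1.2))
    wellFounded_ltD

theorem eventually_ge_clubFilter {k i : Ordinal} (hi : i < k) :
    ∀ᶠ x : Iio k in clubFilter k, i ≤ x.1 := by
  refine mem_generate_of_mem ⟨{β | i ≤ β ∧ β < k}, ⟨fun β hβ => hβ.2, fun β hβ => ?_, ?_⟩, ?_⟩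
  · exact ⟨max β i, ⟨le_max_right _ _, max_lt hβ hi⟩, le_max_left _ _⟩
  · intro δ hδ hδlim hcofinal
    obtain ⟨γ, hγ, -, hγδ⟩ := hcofinal 0 hδlim.pos
    exact ⟨hγ.1.trans hγδ.le, hδ⟩
  · ext x
    exact ⟨fun h => ⟨h, x.2⟩, And.left⟩

theorem exists_lt_forall_eventually_le {Y : Type*} {ι : Type 1} {D : Filter Y}
    {F : Y → Ordinal.{0}} (G : ι → Y → Ordinal.{0}) (S : Y → Set ι)
    (hS : ∀ y, #(S y) < lift.{1} (F y).cof) (hG : ∀ y, ∀ a ∈ S y, G a y < F y)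
    (hSD : ∀ a, ∀ᶠ y in D, a ∈ S y) :
    ∃ b : Y → Ordinal.{0}, (∀ y, b y < F y) ∧ ∀ a, ∀ᶠ y in D, G a y ≤ b y := by
  refine ⟨fun y => sSup ((G · y) '' S y), fun y => ?_, fun a => (hSD a).mono fun y ha => ?_⟩
  · refine Ordinal.sSup_lt_of_lt_cof ?_ (forall_mem_image.2 (hG y))
    rw [← Ordinal.lift_cof]
    exact mk_image_le.trans_lt (hS y)
  · exact le_csSup ⟨F y, forall_mem_image.2 fun a ha => (hG y a ha).le⟩ (mem_image_of_mem _ ha)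

section RankCofinality

variable {Y : Type 1} {D : Filter Y} {F : Y → Ordinal.{0}} {θ : Y → Cardinal.{0}}
  {μ : Cardinal.{0}}

theorem exists_lt_rkD_forall_lt (hwf : WellFounded (ltD D)) (hF : ∀ y, IsSuccLimit (F y))
    (hθ : ∀ y, θ y < (F y).cof) (hμ : ∀ c < μ, ∀ᶠ y in D, c < θ y) {ι : Type 1}
    (f : ι → Ordinal.{1}) (hι : #ι ≤ lift.{1} μ) (hf : ∀ a, f a < rkD D F) :
    ∃ β < rkD D F, ∀ a, f a < β := by
  obtain ⟨ν⟩ : Nonempty (ι ↪ Iio μ.ord) := by rwa [← Cardinal.le_def, mk_Iio_ordinal, card_ord]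
  choose g hgF hfg using fun a => exists_ltD_le_rkD hwf (hf a)
  set S : Y → Set ι := fun y => {a | (ν a : Ordinal) < (θ y).ord ∧ g a y < F y}
  have hS : ∀ y, #(S y) < lift.{1} (F y).cof := by
    intro y
    have hνS : Function.Injective fun a : S y => (⟨ν a, a.2.1⟩ : Iio (θ y).ord) :=
      fun a b hab => Subtype.ext (ν.injective (Subtype.ext (Subtype.mk.inj hab)))
    calc #(S y) ≤ #(Iio (θ y).ord) := mk_le_of_injective hνS
      _ = lift.{1} (θ y) := by rw [mk_Iio_ordinal, card_ord]
      _ < lift.{1} (F y).cof := lift_lt.2 (hθ y)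
  have hSD : ∀ a, ∀ᶠ y in D, a ∈ S y := fun a =>
    ((hμ _ (lt_ord.1 (ν a).2)).and (hgF a)).mono fun y hy => ⟨lt_ord.2 hy.1, hy.2⟩
  obtain ⟨b, hbF, hgb⟩ := exists_lt_forall_eventually_le g S hS (fun y a ha => ha.2) hSD
  refine ⟨rkD D (succ ∘ b), rkD_lt_rkD hwf (univ_mem' fun y => (hF y).succ_lt (hbF y)),
    fun a => ?_⟩
  calc f a ≤ rkD D (g a) := hfg a
    _ ≤ rkD D b := rkD_le_rkD hwf (hgb a)
    _ < rkD D (succ ∘ b) := rkD_lt_rkD hwf (univ_mem' fun y => lt_succ (b y))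

theorem lift_lt_cof_rkD (hwf : WellFounded (ltD D)) (hF : ∀ y, IsSuccLimit (F y))
    (hθ : ∀ y, θ y < (F y).cof) (hμ : ∀ c < μ, ∀ᶠ y in D, c < θ y) :
    lift.{1} μ < (rkD D F).cof := by
  by_contra! hcof
  obtain ⟨s, hs, hsc⟩ := Order.exists_cof_eq (rkD D F).ToType
  obtain ⟨β, hβ, hsβ⟩ := exists_lt_rkD_forall_lt hwf hF hθ hμ
    (fun x : s => (Ordinal.ToType.mk.symm x.1 : Ordinal)) (by rwa [hsc, Ordinal.cof_toType])
    (fun x => (Ordinal.ToType.mk.symm x.1).2)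
  obtain ⟨x, hx, hβx⟩ := hs (Ordinal.ToType.mk ⟨β, hβ⟩)
  have hβx' := Ordinal.ToType.mk.symm.monotone hβx
  rw [OrderIso.symm_apply_apply] at hβx'
  exact (hsβ ⟨x, hx⟩).not_ge hβx'

end RankCofinality

theorem eventually_clubFilter_lt_of_lt_sSup {k : Ordinal.{0}} {L : Ordinal → Cardinal.{0}}
    (hmono : ∀ i j, i < j → j < k → L i < L j) {c : Cardinal.{0}} (hc : c < sSup (L '' Iio k)) :
    ∀ᶠ x : Iio k in clubFilter k, c < L x := by
  obtain ⟨_, ⟨i, hi, rfl⟩, hci⟩ := exists_lt_of_lt_csSup' hc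
  refine (eventually_ge_clubFilter hi).mono fun x hix => hci.trans_le ?_
  rcases hix.eq_or_lt with h | h
  · rw [h]
  · exact (hmono i x h x.2).le

theorem stmt17_general (κ : Cardinal.{0}) (hreg : κ.IsRegular) (hunc : Cardinal.aleph0 < κ)
    (L : Ordinal → Cardinal.{0})
    (hmono : ∀ i j, i < j → j < κ.ord → L i < L j)
    (hgt : ∀ i < κ.ord, κ < L i)
    (lam : Cardinal.{0}) (hlam : lam = sSup (L '' Set.Iio κ.ord))
    (γstar : Ordinal.{1})
    (hγ : γstar = rkD (clubFilter κ.ord)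
        (fun i : ↥(Set.Iio κ.ord) => (Order.succ (L ↑i)).ord)) :
    Cardinal.lift.{1, 0} lam < γstar.cof ∧
      ∃ χ : Cardinal.{1}, χ.IsRegular ∧
        Ordinal.lift.{1, 0} lam.ord < χ.ord ∧ χ.ord ≤ γstar := by
  have hL : ∀ i : Iio κ.ord, ℵ₀ ≤ L i := fun i => (hunc.trans (hgt i i.2)).le
  have hlt : lift.{1} lam < γstar.cof := by
    rw [hγ]
    refine lift_lt_cof_rkD (θ := fun i : Iio κ.ord => L i)
      (wellFounded_ltD_clubFilter (hreg.cof_ord.symm ▸ hunc))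
      (fun i => isSuccLimit_ord ((hL i).trans (le_succ _))) (fun i => ?_) fun c hc => eventually_clubFilter_lt_of_lt_sSup hmono (hlam ▸ hc)
    rw [(isRegular_succ (hL i)).cof_ord]
    exact lt_succ _
  have hκ0 : (0 : Ordinal) < κ.ord :=
    (Ordinal.one_lt_cof_iff.1 (hreg.cof_ord.symm ▸ one_lt_aleph0.trans hunc)).pos
  have hlam : ℵ₀ ≤ lift.{1} lam := by
    rw [hlam, aleph0_le_lift]
    exact (hL ⟨0, hκ0⟩).trans (le_csSup Cardinal.bddAbove_of_small (mem_image_of_mem L hκ0))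
  refine ⟨hlt, γstar.cof, isRegular_cof (Ordinal.one_lt_cof_iff.1 (one_lt_aleph0.trans_le (hlam.trans hlt.le))), ?_,
    Ordinal.ord_cof_le γstar⟩
  rw [Cardinal.lift_ord]
  exact ord_lt_ord.2 hlt

/-- let `κ` be a regular uncountable cardinal, `⟨λ_i : i < κ⟩` an
increasing continuous sequence of cardinals with `λ_i > κ`, `λ = sup_{i<κ} λ_i`, `D` the
club filter on `κ`, and `γ(*) = rk_D ⟨λ_i⁺ : i < κ⟩`.  Then `cf(γ(*)) > λ`; in
particular the interval `(λ, γ(*)]` contains a regular cardinal. -/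
theorem stmt17 (κ : Cardinal.{0}) (hreg : κ.IsRegular) (hunc : Cardinal.aleph0 < κ)
    (L : Ordinal → Cardinal.{0})
    (hmono : ∀ i j, i < j → j < κ.ord → L i < L j)
    (hcont : ∀ i < κ.ord, Order.IsSuccLimit i → L i = sSup (L '' Set.Iio i))
    (hgt : ∀ i < κ.ord, κ < L i)
    (lam : Cardinal.{0}) (hlam : lam = sSup (L '' Set.Iio κ.ord))
    (γstar : Ordinal.{1})
    (hγ : γstar = rkD (clubFilter κ.ord)
        (fun i : ↥(Set.Iio κ.ord) => (Order.succ (L ↑i)).ord)) :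
    Cardinal.lift.{1, 0} lam < γstar.cof ∧
      ∃ χ : Cardinal.{1}, χ.IsRegular ∧
        Ordinal.lift.{1, 0} lam.ord < χ.ord ∧ χ.ord ≤ γstar :=
  stmt17_general κ hreg hunc L hmono hgt lam hlam γstar hγ
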